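/- arXiv:2207.07415 — 4 statements merged into one kernel-verified Lean document; each statement's English description precedes it below -/
import Mathlib

section
/- Let X be a Banach space admitting a countable family (g_n)_{n≥1} of bounded linear functionals that separates points (if g_n(f) = 0 for all n then f = 0). Let E ⊆ X be a closed subspace and suppose there is a bounded linear map J : ℓ^∞ → X with J(c₀) ⊆ E which induces an embedding (bounded below linear map) J' : ℓ^∞/c₀ → X/E. Then E is not complemented in X: there is no bounded linear projection of X onto a closed subspace G with X = E ⊕ G. -/
/-!
Whitley's argument. A bounded projection onto `E` yields `T : X →L[ℝ] X` with kernel `E`, so the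
functionals `g n ∘ T ∘ J` vanish on `c₀`. A functional on `ℓ^∞` vanishing on `c₀` is nonzero at
the indicators of only countably many members of an almost disjoint family: after removing the
finite overlaps, a signed sum of finitely many of these indicators has norm at most `1`. Since
there are uncountably many branches of the binary tree, some infinite `A ⊆ ℕ` is annihilated by
all `g n ∘ T ∘ J`; separation gives `J 1_A ∈ E`, contradicting `dist(1_A, c₀) = 1`.
-/

open Filter

noncomputable def czero : Submodule ℝ (lp (fun _ : ℕ => ℝ) ⊤) where
  carrier := {u | Filter.Tendsto (fun n => u n) Filter.atTop (nhds 0)}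
  add_mem' := by
    intro a b ha hb
    have := ha.add hb
    simpa [lp.coeFn_add, Pi.add_apply] using this
  zero_mem' := by
    simp only []; simpa using (tendsto_const_nhds : Tendsto (fun _ : ℕ => (0:ℝ)) atTop (nhds 0))
  smul_mem' := by
    intro c u hu
    have := hu.const_mul c
    simpa [lp.coeFn_smul, Pi.smul_apply, smul_eq_mul, mul_zero] using this


open Set Encodable

local notation "ℓ∞" => lp (fun _ : ℕ => ℝ) ⊤

section BranchCodes

variable {α : Type*} [Encodable α]

/-- The branch through `x` of the tree of finite sequences, coded into `ℕ`. -/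
def branchCodes (x : ℕ → α) : Set ℕ :=
  range fun n => encode ((List.range n).map x)

lemma branchCodes_infinite (x : ℕ → α) : (branchCodes x).Infinite :=
  infinite_range_of_injective fun n m h => by
    simpa using congrArg List.length (encode_injective h)

lemma finite_branchCodes_inter {x y : ℕ → α} (hxy : x ≠ y) :
    (branchCodes x ∩ branchCodes y).Finite := by
  obtain ⟨k, hk⟩ := Function.ne_iff.mp hxy
  refine ((finite_Iic k).image fun n => encode ((List.range n).map x)).subset ?_
  rintro _ ⟨⟨n, rfl⟩, m, hm⟩
  have hprefix := encode_injective hm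
  obtain rfl : m = n := by simpa using congrArg List.length hprefix
  refine ⟨m, mem_Iic.mpr <| not_lt.mp fun hkm => hk ?_, rfl⟩
  exact (List.map_inj_left.mp hprefix k (List.mem_range.mpr hkm)).symm

end BranchCodes

instance : Uncountable (ℕ → Bool) := by
  rw [← Cardinal.aleph0_lt_mk_iff]
  simp [Cardinal.aleph0_lt_continuum]

noncomputable def lpIndicator (A : Set ℕ) : ℓ∞ :=
  ⟨A.indicator 1, memℓp_infty ⟨1, by
    rintro _ ⟨n, rfl⟩
    by_cases hn : n ∈ A <;> simp [hn]⟩⟩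

@[simp]
lemma lpIndicator_apply (A : Set ℕ) (n : ℕ) : (lpIndicator A : ℕ → ℝ) n = A.indicator 1 n := rfl

lemma lpIndicator_sub_of_subset {A B : Set ℕ} (h : B ⊆ A) :
    lpIndicator A - lpIndicator B = lpIndicator (A \ B) := by
  ext n
  simp [Set.indicator_sdiff h]

lemma lpIndicator_mem_czero {A : Set ℕ} (hA : A.Finite) : lpIndicator A ∈ czero := by
  have hzero : ∀ᶠ n in atTop, n ∉ A := Nat.cofinite_eq_atTop ▸ hA.eventually_cofinite_notMem
  refine tendsto_const_nhds.congr' ?_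
  filter_upwards [hzero] with n hn
  simp [hn]

lemma one_le_infDist_lpIndicator_czero {A : Set ℕ} (hA : A.Infinite) :
    1 ≤ Metric.infDist (lpIndicator A) (czero : Set ℓ∞) := by
  refine (Metric.le_infDist ⟨0, czero.zero_mem⟩).mpr fun v (hv : Tendsto _ _ _) => ?_
  have hlim : Tendsto (fun n => |1 - (v : ℕ → ℝ) n|) atTop (nhds 1) := by
    simpa using ((tendsto_const_nhds (x := (1 : ℝ))).sub hv).abs
  refine le_of_tendsto_of_frequently hlim ((Nat.frequently_atTop_iff_infinite.mpr hA).mono ?_)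
  intro n hn
  simpa [dist_eq_norm, indicator_of_mem hn] using
    lp.norm_apply_le_norm ENNReal.top_ne_zero (lpIndicator A - v) n

lemma norm_sum_smul_lpIndicator_le_one {ι : Type*} (s : Finset ι) {B : ι → Set ℕ}
    (hB : (s : Set ι).PairwiseDisjoint B) {a : ι → ℝ} (ha : ∀ i, |a i| ≤ 1) :
    ‖∑ i ∈ s, a i • lpIndicator (B i)‖ ≤ 1 := by
  refine lp.norm_le_of_forall_le zero_le_one fun n => ?_
  have hcoord : (↑(∑ i ∈ s, a i • lpIndicator (B i)) : ℕ → ℝ) n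
      = ∑ i ∈ s, a i * (B i).indicator 1 n := by
    rw [lp.coeFn_sum, Finset.sum_apply]
    simp
  rw [hcoord, Real.norm_eq_abs]
  calc |∑ i ∈ s, a i * (B i).indicator 1 n|
      ≤ ∑ i ∈ s, |a i * (B i).indicator 1 n| := Finset.abs_sum_le_sum_abs _ _
    _ ≤ ∑ i ∈ s, (B i).indicator 1 n := by
        refine Finset.sum_le_sum fun i _ => ?_
        by_cases hn : n ∈ B i <;> simp [hn, ha i]
    _ = (⋃ i ∈ s, B i).indicator 1 n := (Finset.indicator_biUnion_apply s B hB n).symm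
    _ ≤ 1 := Set.indicator_apply_le' (fun _ => le_rfl) (fun _ => zero_le_one)

lemma apply_lpIndicator_eq_of_subset (h : ℓ∞ →L[ℝ] ℝ) (hh : ∀ u ∈ czero, h u = 0)
    {A B : Set ℕ} (hBA : B ⊆ A) (hfin : (A \ B).Finite) :
    h (lpIndicator B) = h (lpIndicator A) := by
  have := hh _ (lpIndicator_mem_czero hfin)
  rw [← lpIndicator_sub_of_subset hBA, map_sub, sub_eq_zero] at this
  exact this.symm

/-- Whitley's estimate: disjointify the sets by removing finitely many points (invisible to `h`)
and test `h` against the signed sum of the resulting indicators, which has norm at most `1`. -/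
lemma sum_abs_apply_lpIndicator_le_opNorm (h : ℓ∞ →L[ℝ] ℝ) (hh : ∀ u ∈ czero, h u = 0)
    {ι : Type*} {A : ι → Set ℕ}
    (hA : Pairwise fun i j => (A i ∩ A j).Finite) (s : Finset ι) :
    ∑ i ∈ s, |h (lpIndicator (A i))| ≤ ‖h‖ := by
  classical
  set B : ι → Set ℕ := fun i => A i \ ⋃ j ∈ s.erase i, A j
  have hBA : ∀ i, B i ⊆ A i := fun i => sdiff_subset
  have hB : (s : Set ι).PairwiseDisjoint B := by
    intro i _ j hj hij
    refine Set.disjoint_left.mpr fun n hni hnj => hni.2 ?_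
    exact mem_biUnion (Finset.mem_erase.mpr ⟨hij.symm, hj⟩) (hBA j hnj)
  have hhB : ∀ i, h (lpIndicator (B i)) = h (lpIndicator (A i)) := by
    intro i
    refine apply_lpIndicator_eq_of_subset h hh (hBA i) ?_
    rw [sdiff_sdiff_right_self, inter_iUnion₂]
    exact (s.erase i).finite_toSet.biUnion fun j hj => hA (Finset.ne_of_mem_erase hj).symm
  let u := ∑ i ∈ s, (SignType.sign (h (lpIndicator (A i))) : ℝ) • lpIndicator (B i)
  calc ∑ i ∈ s, |h (lpIndicator (A i))| = h u := by
        simp only [u, map_sum, map_smul, smul_eq_mul, hhB, sign_mul_self]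
    _ ≤ ‖h‖ * ‖u‖ := (le_abs_self _).trans (h.le_opNorm u)
    _ ≤ ‖h‖ := mul_le_of_le_one_right (norm_nonneg h)
        (norm_sum_smul_lpIndicator_le_one s hB fun i => by
          rcases SignType.trichotomy (SignType.sign (h (lpIndicator (A i)))) with hs | hs | hs <;>
            simp [hs])

lemma countable_setOf_apply_lpIndicator_ne_zero (h : ℓ∞ →L[ℝ] ℝ) (hh : ∀ u ∈ czero, h u = 0)
    {ι : Type*} {A : ι → Set ℕ}
    (hA : Pairwise fun i j => (A i ∩ A j).Finite) :
    {i | h (lpIndicator (A i)) ≠ 0}.Countable := by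
  have hsum : Summable fun i => |h (lpIndicator (A i))| :=
    summable_of_sum_le (fun _ => abs_nonneg _) (sum_abs_apply_lpIndicator_le_opNorm h hh hA)
  simpa [Function.support] using hsum.countable_support

lemma exists_infinite_forall_apply_lpIndicator_eq_zero {κ : Type*} [Countable κ]
    (h : κ → ℓ∞ →L[ℝ] ℝ) (hh : ∀ k, ∀ u ∈ czero, h k u = 0) :
    ∃ A : Set ℕ, A.Infinite ∧ ∀ k, h k (lpIndicator A) = 0 := by
  let bad := ⋃ k, {x : ℕ → Bool | h k (lpIndicator (branchCodes x)) ≠ 0}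
  have hbad : bad.Countable :=
    countable_iUnion fun k => countable_setOf_apply_lpIndicator_ne_zero (h k) (hh k)
      fun _ _ => finite_branchCodes_inter
  obtain ⟨x, hx⟩ := (ne_univ_iff_exists_notMem bad).mp fun huniv =>
    not_countable_univ (huniv ▸ hbad)
  exact ⟨branchCodes x, branchCodes_infinite x, by simpa [bad] using hx⟩

theorem abstract_non_complemented_general
    (X : Type*) [NormedAddCommGroup X] [NormedSpace ℝ X]
    (g : ℕ → (X →L[ℝ] ℝ))
    (hsep : ∀ f : X, (∀ n, g n f = 0) → f = 0)
    (E : Submodule ℝ X)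
    (J : lp (fun _ : ℕ => ℝ) ⊤ →L[ℝ] X)
    (hJc0 : ∀ u ∈ czero, J u ∈ E)
    (c : ℝ) (hc : 0 < c)
    (hlow : ∀ u : lp (fun _ : ℕ => ℝ) ⊤,
      c * Metric.infDist u (czero : Set (lp (fun _ : ℕ => ℝ) ⊤)) ≤ Metric.infDist (J u) (E : Set X)) :
    ¬ Submodule.ClosedComplemented E := by
  intro hcompl
  obtain ⟨G, hG⟩ := hcompl.exists_isTopCompl
  have hker : ∀ x, G.projectionL E hG.symm x = 0 ↔ x ∈ E := fun _ =>
    Submodule.projectionL_apply_eq_zero_iff hG.symm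
  obtain ⟨A, hA, hvanish⟩ := exists_infinite_forall_apply_lpIndicator_eq_zero
    (fun n => g n ∘L G.projectionL E hG.symm ∘L J) fun n u hu => by
      simp [(hker _).mpr (hJc0 u hu)]
  have hJA : J (lpIndicator A) ∈ E := (hker _).mp (hsep _ hvanish)
  have hbound := hlow (lpIndicator A)
  rw [Metric.infDist_zero_of_mem hJA] at hbound
  nlinarith [one_le_infDist_lpIndicator_czero hA]

/-- Abstract Whitley-type non-complementation principle: if `X` has a countable separating
family of bounded functionals and contains a copy of `ℓ^∞` whose quotient map
`ℓ^∞/c₀ → X/E` is bounded below, then the closed subspace `E` is not complemented in `X`. -/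
theorem abstract_non_complemented
    (X : Type*) [NormedAddCommGroup X] [NormedSpace ℝ X] [CompleteSpace X]
    (g : ℕ → (X →L[ℝ] ℝ))
    (hsep : ∀ f : X, (∀ n, g n f = 0) → f = 0)
    (E : Submodule ℝ X) (hE : IsClosed (E : Set X))
    (J : lp (fun _ : ℕ => ℝ) ⊤ →L[ℝ] X)
    (hJc0 : ∀ u ∈ czero, J u ∈ E)
    (c : ℝ) (hc : 0 < c)
    (hlow : ∀ u : lp (fun _ : ℕ => ℝ) ⊤,
      c * Metric.infDist u (czero : Set (lp (fun _ : ℕ => ℝ) ⊤)) ≤ Metric.infDist (J u) (E : Set X)) :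
    ¬ Submodule.ClosedComplemented E :=
  abstract_non_complemented_general X g hsep E J hJc0 c hc hlow
end

section
/- Let X be a Banach space with a countable separating family of bounded linear functionals (g_n), and let T : X → X be a bounded linear operator. Let (A_i)_{i∈I} be an uncountable family of infinite subsets of ℕ with pairwise finite intersections, and J : ℓ^∞ → X a bounded linear map such that J(w) ∈ ker T whenever w ∈ ℓ^∞ has finite support. If for every i ∈ I there exists u_i ∈ ℓ^∞(A_i) with ‖u_i‖ ≤ 1 and T(Ju_i) ≠ 0, then one obtains a contradiction; hence there exists i ∈ I with J(ℓ^∞(A_i)) ⊆ ker T. -/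
/-!
Let `v i ∈ ℓ^∞(A i)` have norm at most `1`. Away from the finite set where two of the `A i`,
`i ∈ F`, meet, the `v i` have disjoint supports, so a signed sum `∑ i ∈ F, ±v i` is a sequence of
sup norm at most `1` plus a finitely supported one, and the latter is invisible to a functional `φ`
vanishing on finitely supported sequences. With the signs of the `φ (v i)`, this shows that
`|φ (v i)| ≥ ε` for at most `‖φ‖ / ε` indices, so `φ (v i) ≠ 0` only for countably many `i`.
As the countably many functionals `g n ∘ T ∘ J` separate points, `T (J (v i)) ≠ 0` for countably
many `i` only.
-/

open Finset

local notation "ℓ∞" => lp (fun _ : ℕ => ℝ) ⊤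

theorem Submodule.exists_norm_le_one_map_ne_zero {𝕜 E F : Type*} [RCLike 𝕜]
    [NormedAddCommGroup E] [NormedSpace 𝕜 E] [AddCommGroup F] [Module 𝕜 F]
    (p : Submodule 𝕜 E) (L : E →ₗ[𝕜] F) {x : E} (hx : x ∈ p) (hLx : L x ≠ 0) :
    ∃ y ∈ p, ‖y‖ ≤ 1 ∧ L y ≠ 0 := by
  have hx0 : x ≠ 0 := fun h => hLx (by rw [h, map_zero])
  refine ⟨(‖x‖⁻¹ : 𝕜) • x, p.smul_mem _ hx, (norm_smul_inv_norm hx0).le, ?_⟩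
  rw [map_smul]
  exact smul_ne_zero (by simpa using hx0) hLx

def lpInftyOn (A : Set ℕ) : Submodule ℝ ℓ∞ where
  carrier := {u | ∀ n ∉ A, u n = 0}
  add_mem' {u v} hu hv n hn := by simp [hu n hn, hv n hn]
  zero_mem' _ _ := rfl
  smul_mem' c u hu n hn := by simp [hu n hn]

theorem exists_finite_support_norm_sub_le {w : ℓ∞} {S : Set ℕ} (hS : S.Finite) {r : ℝ}
    (hr : 0 ≤ r) (hw : ∀ n ∉ S, |w n| ≤ r) :
    ∃ b : ℓ∞, (Function.support fun n => b n).Finite ∧ ‖w - b‖ ≤ r := by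
  classical
  set b : ℓ∞ := ∑ n ∈ hS.toFinset, lp.single ⊤ n (w n)
  have hb : ∀ n, b n = if n ∈ S then w n else 0 := fun n => by
    simp only [b, lp.coeFn_sum, lp.coeFn_single, Finset.sum_apply, Finset.sum_pi_single,
      Set.Finite.mem_toFinset]
  refine ⟨b, hS.subset fun n hn => ?_, lp.norm_le_of_forall_le hr fun n => ?_⟩
  · by_contra hnS
    simp [hb, hnS] at hn
  · by_cases hn : n ∈ S
    · simp [hb, hn, hr]
    · simpa [hb, hn] using hw n hn

theorem abs_apply_le_of_abs_le_off_finite (φ : ℓ∞ →L[ℝ] ℝ)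
    (hφ : ∀ w : ℓ∞, (Function.support fun n => w n).Finite → φ w = 0)
    {w : ℓ∞} {S : Set ℕ} (hS : S.Finite) {r : ℝ} (hr : 0 ≤ r) (hw : ∀ n ∉ S, |w n| ≤ r) :
    |φ w| ≤ ‖φ‖ * r := by
  obtain ⟨b, hb, hwb⟩ := exists_finite_support_norm_sub_le hS hr hw
  calc |φ w| = ‖φ (w - b)‖ := by rw [map_sub, hφ b hb, sub_zero, Real.norm_eq_abs]
    _ ≤ ‖φ‖ * ‖w - b‖ := φ.le_opNorm _
    _ ≤ ‖φ‖ * r := by gcongr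

section AlmostDisjoint

variable {I : Type*} {A : I → Set ℕ} {v : I → ℓ∞}

theorem abs_sum_smul_apply_le_one (hvA : ∀ i, v i ∈ lpInftyOn (A i)) (hv : ∀ i, ‖v i‖ ≤ 1)
    {c : I → ℝ} (hc : ∀ i, |c i| ≤ 1) (F : Finset I) {n : ℕ}
    (hn : n ∉ ⋃ q ∈ F.offDiag, A q.1 ∩ A q.2) :
    |(∑ i ∈ F, c i • v i) n| ≤ 1 := by
  rw [lp.coeFn_sum, Finset.sum_apply]
  simp only [lp.coeFn_smul, Pi.smul_apply, smul_eq_mul]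
  by_cases hex : ∃ i ∈ F, n ∈ A i
  · obtain ⟨i, hiF, hni⟩ := hex
    have hother : ∀ j ∈ F, j ≠ i → c j * v j n = 0 := fun j hjF hji => by
      have hnj : n ∉ A j := fun hnj => hn <| Set.mem_biUnion (x := (j, i))
        (Finset.mem_coe.mpr (Finset.mem_offDiag.mpr ⟨hjF, hiF, hji⟩)) ⟨hnj, hni⟩
      rw [hvA j n hnj, mul_zero]
    rw [Finset.sum_eq_single_of_mem i hiF hother, abs_mul]
    exact mul_le_one₀ (hc i) (abs_nonneg _)
      ((lp.norm_apply_le_norm ENNReal.top_ne_zero (v i) n).trans (hv i))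
  · rw [Finset.sum_eq_zero fun i hi => by rw [hvA i n fun h => hex ⟨i, hi, h⟩, mul_zero], abs_zero]
    exact zero_le_one

variable (had : Pairwise fun i j => (A i ∩ A j).Finite) (φ : ℓ∞ →L[ℝ] ℝ)
  (hφ : ∀ w : ℓ∞, (Function.support fun n => w n).Finite → φ w = 0)
  (hvA : ∀ i, v i ∈ lpInftyOn (A i)) (hv : ∀ i, ‖v i‖ ≤ 1)
include had hφ hvA hv

theorem card_mul_le_opNorm {ε : ℝ} {F : Finset I} (hF : ∀ i ∈ F, ε ≤ |φ (v i)|) :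
    #F * ε ≤ ‖φ‖ := by
  set c : I → ℝ := fun i => SignType.sign (φ (v i))
  have hc : ∀ i, |c i| ≤ 1 := fun i => by
    rcases lt_trichotomy (φ (v i)) 0 with h | h | h <;> simp [c, h]
  have hS : (⋃ q ∈ F.offDiag, A q.1 ∩ A q.2).Finite :=
    F.offDiag.finite_toSet.biUnion fun q hq => had (Finset.mem_offDiag.mp hq).2.2
  calc #F * ε = ∑ _i ∈ F, ε := by rw [Finset.sum_const, nsmul_eq_mul]
    _ ≤ ∑ i ∈ F, |φ (v i)| := Finset.sum_le_sum hF
    _ = φ (∑ i ∈ F, c i • v i) := by simp [c, map_sum, map_smul]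
    _ ≤ |φ (∑ i ∈ F, c i • v i)| := le_abs_self _
    _ ≤ ‖φ‖ * 1 := abs_apply_le_of_abs_le_off_finite φ hφ hS zero_le_one
        fun n hn => abs_sum_smul_apply_le_one hvA hv hc F hn
    _ = ‖φ‖ := mul_one _

theorem finite_setOf_le_abs_apply {ε : ℝ} (hε : 0 < ε) : {i | ε ≤ |φ (v i)|}.Finite := by
  by_contra hinf
  obtain ⟨N, hN⟩ := exists_nat_gt (‖φ‖ / ε)
  obtain ⟨F, hFsub, hFcard⟩ := Set.Infinite.exists_subset_card_eq hinf N
  have := card_mul_le_opNorm had φ hφ hvA hv fun i hi => hFsub hi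
  rw [hFcard, ← le_div_iff₀ hε] at this
  linarith

theorem countable_setOf_apply_ne_zero : {i | φ (v i) ≠ 0}.Countable := by
  refine (Set.countable_iUnion fun k : ℕ =>
    (finite_setOf_le_abs_apply had φ hφ hvA hv (Nat.one_div_pos_of_nat (n := k))).countable).mono
      fun i hi => ?_
  obtain ⟨k, hk⟩ := exists_nat_one_div_lt (abs_pos.mpr hi)
  exact Set.mem_iUnion.mpr ⟨k, hk.le⟩

end AlmostDisjoint

theorem whitley_counting_lemma_general
    (X : Type*) [NormedAddCommGroup X] [NormedSpace ℝ X]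
    (g : ℕ → (X →L[ℝ] ℝ))
    (hsep : ∀ f : X, (∀ n, g n f = 0) → f = 0)
    (T : X →L[ℝ] X)
    (I : Type*) (hI : ¬ Countable I)
    (A : I → Set ℕ)
    (had : ∀ i j, i ≠ j → (A i ∩ A j).Finite)
    (J : lp (fun _ : ℕ => ℝ) ⊤ →L[ℝ] X)
    (hfin : ∀ w : lp (fun _ : ℕ => ℝ) ⊤,
      (Function.support fun n => w n).Finite → T (J w) = 0) :
    ∃ i : I, ∀ u : lp (fun _ : ℕ => ℝ) ⊤, (∀ n ∉ A i, u n = 0) → T (J u) = 0 := by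
  by_contra! hcon
  have hnorm : ∀ i, ∃ v ∈ lpInftyOn (A i), ‖v‖ ≤ 1 ∧ T (J v) ≠ 0 := fun i =>
    let ⟨_, huA, hTu⟩ := hcon i
    (lpInftyOn (A i)).exists_norm_le_one_map_ne_zero (T.comp J).toLinearMap huA hTu
  choose v hvA hv hTv using hnorm
  have hφ : ∀ n, ∀ w : ℓ∞, (Function.support fun n => w n).Finite → (g n).comp (T.comp J) w = 0 :=
    fun n w hw => by simp [hfin w hw]
  refine hI (Set.countable_univ_iff.mp ((Set.countable_iUnion fun n =>
    countable_setOf_apply_ne_zero had _ (hφ n) hvA hv).mono fun i _ => Set.mem_iUnion.mpr ?_))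
  by_contra! hi
  exact hTv i (hsep _ fun n => by simpa using hi n)

/-- Whitley's counting lemma, abstract form: given a countable separating family of
functionals on `X`, an uncountable almost-disjoint family `(A i)` of infinite subsets of `ℕ`,
and a bounded map `J : ℓ^∞ → X` sending finitely supported sequences into `ker T`,
some `ℓ^∞(A i)` is mapped into `ker T` by `J`. -/
theorem whitley_counting_lemma
    (X : Type*) [NormedAddCommGroup X] [NormedSpace ℝ X]
    (g : ℕ → (X →L[ℝ] ℝ))
    (hsep : ∀ f : X, (∀ n, g n f = 0) → f = 0)
    (T : X →L[ℝ] X)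
    (I : Type*) (hI : ¬ Countable I)
    (A : I → Set ℕ)
    (hinf : ∀ i, (A i).Infinite)
    (had : ∀ i j, i ≠ j → (A i ∩ A j).Finite)
    (J : lp (fun _ : ℕ => ℝ) ⊤ →L[ℝ] X)
    (hfin : ∀ w : lp (fun _ : ℕ => ℝ) ⊤,
      (Function.support fun n => w n).Finite → T (J w) = 0) :
    ∃ i : I, ∀ u : lp (fun _ : ℕ => ℝ) ⊤, (∀ n ∉ A i, u n = 0) → T (J u) = 0 :=
  whitley_counting_lemma_general X g hsep T I hI A had J hfin
end

section
/- The space c₀ of sequences converging to zero is not complemented in ℓ^∞(ℕ): there is no bounded linear projection P : ℓ^∞ → ℓ^∞ with range c₀. -/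
open Filter

namespace PhillipsAux

noncomputable abbrev X := lp (fun _ : ℕ => ℝ) ⊤

/-- Characteristic function of a set as an element of `ℓ^∞`. -/
noncomputable def chi (A : Set ℕ) : X :=
  ⟨A.indicator 1, memℓp_infty ⟨1, by
    rintro - ⟨n, rfl⟩
    by_cases h : n ∈ A <;> simp [Set.indicator, h]⟩⟩

lemma chi_apply (A : Set ℕ) (n : ℕ) : (chi A : ℕ → ℝ) n = A.indicator 1 n := rfl

/-- The encoding map for branches of the binary tree. -/
noncomputable def g (x : ℕ → Bool) (n : ℕ) : ℕ :=
  Encodable.encode (List.ofFn fun i : Fin n => x i)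

lemma g_inj {x y : ℕ → Bool} {n m : ℕ} (h : g x n = g y m) :
    n = m ∧ ∀ i, i < n → x i = y i := by
  have h1 := Encodable.encode_injective h
  have h2 := List.ofFn_inj'.mp h1
  obtain ⟨rfl, h3⟩ := Sigma.mk.inj_iff.mp h2
  refine ⟨rfl, fun i hi => ?_⟩
  exact congrFun (eq_of_heq h3) ⟨i, hi⟩

/-- Almost disjoint family indexed by `ℕ → Bool`. -/
noncomputable def aSet (x : ℕ → Bool) : Set ℕ := Set.range (g x)

lemma aSet_infinite (x : ℕ → Bool) : (aSet x).Infinite :=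
  Set.infinite_range_of_injective fun n m h => (g_inj h).1

lemma aSet_inter_finite {x y : ℕ → Bool} (hxy : x ≠ y) : (aSet x ∩ aSet y).Finite := by
  obtain ⟨k, hk⟩ := Function.ne_iff.mp hxy
  apply Set.Finite.subset ((Set.finite_Iic k).image (g x))
  rintro m ⟨⟨n, rfl⟩, ⟨n', hn'⟩⟩
  refine ⟨n, ?_, rfl⟩
  obtain ⟨rfl, h2⟩ := g_inj hn'.symm
  simp only [Set.mem_Iic]
  by_contra hkn
  push_neg at hkn
  exact hk (h2 k hkn)

lemma mem_czero {u : X} : u ∈ czero ↔ Tendsto (fun n => (u : ℕ → ℝ) n) atTop (nhds 0) :=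
  Iff.rfl

lemma czero_of_eventually_zero {u : X} (h : ∀ᶠ n in atTop, (u : ℕ → ℝ) n = 0) :
    u ∈ czero := by
  rw [mem_czero]
  exact Tendsto.congr' (by filter_upwards [h] with n hn using hn.symm) tendsto_const_nhds

lemma chi_not_mem (x : ℕ → Bool) : chi (aSet x) ∉ czero := by
  intro h
  rw [mem_czero, NormedAddCommGroup.tendsto_nhds_zero] at h
  obtain ⟨N, hN⟩ := (h (1/2) (by norm_num)).exists_forall_of_atTop
  obtain ⟨b, hb, hNb⟩ := (aSet_infinite x).exists_gt N
  have := hN b hNb.le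
  rw [chi_apply, Set.indicator_of_mem hb] at this
  norm_num at this

/-- Key finiteness lemma: the set of branches on which a fixed coordinate functional of `Q`
is large is finite, when `Q` kills `c₀`. -/
lemma fiber_finite (Q : X →L[ℝ] X) (hQ0 : ∀ u ∈ czero, Q u = 0) (n k : ℕ) :
    {x : ℕ → Bool | 1/((k : ℝ)+1) < |(Q (chi (aSet x)) : ℕ → ℝ) n|}.Finite := by
  by_contra hinf
  rw [← Set.not_infinite, not_not] at hinf
  obtain ⟨S, hSsub, hScard⟩ := hinf.exists_subset_card_eq (⌈‖Q‖ * ((k : ℝ)+1)⌉₊ + 1)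
  set ε : ℝ := 1/((k : ℝ)+1) with hε_def
  have hε : 0 < ε := by positivity
  set c : (ℕ → Bool) → ℝ := fun x => (Q (chi (aSet x)) : ℕ → ℝ) n with hc_def
  set s : (ℕ → Bool) → ℝ := fun x => if 0 ≤ c x then 1 else -1 with hs_def
  have hsc : ∀ x, s x * c x = |c x| := by
    intro x
    rw [hs_def]
    dsimp only
    split_ifs with h
    · rw [abs_of_nonneg h, one_mul]
    · rw [abs_of_neg (lt_of_not_ge h)]; ring
  set u : X := ∑ x ∈ S, s x • chi (aSet x) with hu_def
  set B : Set ℕ := ⋃ x ∈ (S : Set (ℕ → Bool)), ⋃ y ∈ (S : Set (ℕ → Bool)) \ {x},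
      aSet x ∩ aSet y with hB_def
  have hB : B.Finite := by
    apply Set.Finite.biUnion S.finite_toSet
    intro x _
    apply Set.Finite.biUnion (S.finite_toSet.subset Set.diff_subset)
    intro y hy
    exact aSet_inter_finite fun h => hy.2 (by simp [h])
  -- the "disjointified" part
  set vf : ℕ → ℝ := fun m => ∑ x ∈ S, s x * (aSet x \ B).indicator 1 m with hvf_def
  have habs_s : ∀ x, |s x| = 1 := by
    intro x; rw [hs_def]; dsimp only; split_ifs <;> simp
  have hvf_le : ∀ m, |vf m| ≤ 1 := by
    intro m
    by_cases hex : ∃ x₀ ∈ S, m ∈ aSet x₀ \ B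
    · obtain ⟨x₀, hx₀S, hx₀⟩ := hex
      have : vf m = s x₀ * (aSet x₀ \ B).indicator 1 m := by
        rw [hvf_def]
        apply Finset.sum_eq_single x₀
        · intro y hyS hyx
          have : m ∉ aSet y \ B := by
            intro hy
            exact hx₀.2 (Set.mem_biUnion hx₀S
              (Set.mem_biUnion (⟨hyS, fun h => hyx (by simpa using h)⟩ :
                y ∈ (S : Set (ℕ → Bool)) \ {x₀}) ⟨hx₀.1, hy.1⟩))
          rw [Set.indicator_of_notMem this, mul_zero]
        · intro h; exact absurd hx₀S h
      rw [this, Set.indicator_of_mem hx₀, Pi.one_apply, mul_one, habs_s]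
    · push_neg at hex
      have : vf m = 0 := by
        rw [hvf_def]
        apply Finset.sum_eq_zero
        intro y hy
        rw [Set.indicator_of_notMem (hex y hy), mul_zero]
      rw [this]; norm_num
  have hv_mem : Memℓp vf ⊤ := memℓp_infty ⟨1, by
    rintro - ⟨m, rfl⟩
    simpa [Real.norm_eq_abs] using hvf_le m⟩
  set v : X := ⟨vf, hv_mem⟩ with hv_def
  have hv_coe : ∀ m, (v : ℕ → ℝ) m = vf m := fun m => rfl
  have hvnorm : ‖v‖ ≤ 1 := lp.norm_le_of_forall_le one_pos.le fun m => by
    simpa [Real.norm_eq_abs, hv_coe] using hvf_le m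
  have hu_coe : ∀ m, (u : ℕ → ℝ) m = ∑ x ∈ S, s x * (aSet x).indicator 1 m := by
    intro m
    rw [hu_def, lp.coeFn_sum, Finset.sum_apply]
    refine Finset.sum_congr rfl fun x _ => ?_
    rw [lp.coeFn_smul, Pi.smul_apply, chi_apply, smul_eq_mul]
  -- u - v is eventually zero hence in c₀
  have huv : u - v ∈ czero := by
    apply czero_of_eventually_zero
    obtain ⟨N, hN⟩ := hB.bddAbove
    filter_upwards [eventually_gt_atTop N] with m hm
    have hmB : m ∉ B := fun h => absurd (hN h) (not_le.mpr hm)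
    have : ∀ x ∈ S, (aSet x \ B).indicator (1 : ℕ → ℝ) m = (aSet x).indicator 1 m := by
      intro x _
      by_cases hx : m ∈ aSet x
      · rw [Set.indicator_of_mem hx, Set.indicator_of_mem (Set.mem_diff m |>.mpr ⟨hx, hmB⟩)]
      · rw [Set.indicator_of_notMem hx, Set.indicator_of_notMem fun h => hx h.1]
    rw [lp.coeFn_sub, Pi.sub_apply, hu_coe, hv_coe, hvf_def]
    dsimp only
    rw [sub_eq_zero]
    exact Finset.sum_congr rfl fun x hx => by rw [this x hx]
  have hQuv : Q u = Q v := by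
    have h0 : Q (u - v) = 0 := hQ0 _ huv
    rw [map_sub, sub_eq_zero] at h0
    exact h0
  have hQun : (Q u : ℕ → ℝ) n = ∑ x ∈ S, s x * c x := by
    have h1 : Q u = ∑ x ∈ S, s x • Q (chi (aSet x)) := by
      rw [hu_def, map_sum]
      exact Finset.sum_congr rfl fun x _ => map_smul Q (s x) _
    rw [h1, lp.coeFn_sum, Finset.sum_apply]
    refine Finset.sum_congr rfl fun x _ => ?_
    rw [lp.coeFn_smul, Pi.smul_apply, smul_eq_mul, hc_def]
  have hbound : |(Q v : ℕ → ℝ) n| ≤ ‖Q‖ := by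
    calc |(Q v : ℕ → ℝ) n| ≤ ‖Q v‖ := by
          have h := lp.norm_apply_le_norm (E := fun _ : ℕ => ℝ) ENNReal.top_ne_zero (Q v) n
          rwa [Real.norm_eq_abs] at h
      _ ≤ ‖Q‖ * ‖v‖ := Q.le_opNorm v
      _ ≤ ‖Q‖ * 1 := mul_le_mul_of_nonneg_left hvnorm (norm_nonneg Q)
      _ = ‖Q‖ := mul_one _
  have hsum : ∑ x ∈ S, |c x| ≤ ‖Q‖ := by
    calc ∑ x ∈ S, |c x| = ∑ x ∈ S, s x * c x := by
          exact Finset.sum_congr rfl fun x _ => (hsc x).symm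
      _ = (Q u : ℕ → ℝ) n := hQun.symm
      _ = (Q v : ℕ → ℝ) n := by rw [hQuv]
      _ ≤ |(Q v : ℕ → ℝ) n| := le_abs_self _
      _ ≤ ‖Q‖ := hbound
  have hlow : (S.card : ℝ) * ε ≤ ∑ x ∈ S, |c x| := by
    have := Finset.card_nsmul_le_sum S (fun x => |c x|) ε fun x hx => (hSsub hx).le
    simpa [nsmul_eq_mul] using this
  have hcard_le : (S.card : ℝ) ≤ ‖Q‖ * ((k : ℝ) + 1) := by
    have h1 : (S.card : ℝ) * ε ≤ ‖Q‖ := hlow.trans hsum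
    rw [hε_def] at h1
    have hk1 : (0 : ℝ) < (k : ℝ) + 1 := by positivity
    rw [mul_one_div, div_le_iff₀ hk1] at h1
    exact h1
  have h2 : (S.card : ℝ) ≤ (⌈‖Q‖ * ((k : ℝ) + 1)⌉₊ : ℝ) :=
    hcard_le.trans (Nat.le_ceil _)
  have h3 : S.card ≤ ⌈‖Q‖ * ((k : ℝ) + 1)⌉₊ := Nat.cast_le.mp h2
  omega

end PhillipsAux

open PhillipsAux in
/-- Phillips–Sobczyk theorem: `c₀` is not complemented in `ℓ^∞(ℕ)`;
there is no bounded linear projection of `ℓ^∞` onto `c₀`. -/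
theorem czero_not_complemented :
    ¬ ∃ P : lp (fun _ : ℕ => ℝ) ⊤ →L[ℝ] lp (fun _ : ℕ => ℝ) ⊤,
        (∀ u, P (P u) = P u) ∧ Set.range P = (czero : Set (lp (fun _ : ℕ => ℝ) ⊤)) := by
  rintro ⟨P, hPP, hrange⟩
  set Q : X →L[ℝ] X := ContinuousLinearMap.id ℝ X - P with hQdef
  have hQ_apply : ∀ u : X, Q u = u - P u := fun u => rfl
  have hPfix : ∀ u : X, u ∈ czero → P u = u := by
    intro u hu
    have : u ∈ Set.range P := by rw [hrange]; exact hu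
    obtain ⟨w, rfl⟩ := this
    exact hPP w
  have hQ0 : ∀ u ∈ czero, Q u = 0 := by
    intro u hu
    rw [hQ_apply, hPfix u hu, sub_self]
  have hQchi : ∀ x : ℕ → Bool, ∃ n : ℕ, (Q (chi (aSet x)) : ℕ → ℝ) n ≠ 0 := by
    intro x
    by_contra hcon
    push_neg at hcon
    have hq0 : Q (chi (aSet x)) = 0 := lp.ext (funext fun n => by simpa using hcon n)
    have hPchi : P (chi (aSet x)) = chi (aSet x) := by
      have := hQ_apply (chi (aSet x))
      rw [hq0] at this
      exact (sub_eq_zero.mp this.symm).symm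
    have : chi (aSet x) ∈ czero := by
      rw [← SetLike.mem_coe, ← hrange]
      exact ⟨chi (aSet x), hPchi⟩
    exact chi_not_mem x this
  have hchoice : ∀ x : ℕ → Bool, ∃ p : ℕ × ℕ,
      1/((p.2 : ℝ)+1) < |(Q (chi (aSet x)) : ℕ → ℝ) p.1| := by
    intro x
    obtain ⟨n, hn⟩ := hQchi x
    obtain ⟨k, hk⟩ := exists_nat_one_div_lt (abs_pos.mpr hn)
    exact ⟨(n, k), hk⟩
  have hcover : (Set.univ : Set (ℕ → Bool)) ⊆
      ⋃ p : ℕ × ℕ, {x | 1/((p.2 : ℝ)+1) < |(Q (chi (aSet x)) : ℕ → ℝ) p.1|} := by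
    intro x _
    obtain ⟨p, hp⟩ := hchoice x
    exact Set.mem_iUnion.mpr ⟨p, hp⟩
  have hcount : (Set.univ : Set (ℕ → Bool)).Countable :=
    Set.Countable.mono hcover
      (Set.countable_iUnion fun p => (fiber_finite Q hQ0 p.1 p.2).countable)
  have hC : Countable (ℕ → Bool) := Set.countable_univ_iff.mp hcount
  have h2 : Countable (Set ℕ) :=
    Countable.of_equiv _ (Equiv.arrowCongr (Equiv.refl ℕ) Equiv.propEquivBool).symm
  obtain ⟨f, hf⟩ := h2.exists_injective_nat
  exact Function.cantor_injective f hf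
end

section
/- Let X be a normed space, C ⊆ X a closed subspace, and suppose there is a bounded linear map J : ℓ^∞ → X and a constant c > 0 such that dist(Ju, C) ≥ c·dist(u, c₀) for all u ∈ ℓ^∞, and J(c₀) ⊆ C. Then the quotient X/C is not separable. -/
open Filter Metric Topology Encodable

/-!
Code `ℕ × ℤ` by `ℕ` and attach to each real `r` the indicator `u r ∈ ℓ^∞` of the graph of
`n ↦ ⌊r 2ⁿ⌋`. Two such graphs meet in a finite set, so `u r - u s` equals `1` at arbitrarily
large indices and lies at distance at least `1` from `c₀`. The lower bound turns the images of
the `u r` in `X ⧸ C` into an uncountable `c`-separated family, which no separable space contains.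
-/

theorem Pairwise.not_separableSpace_of_le_dist {E ι : Type*} [PseudoMetricSpace E]
    [Uncountable ι] {f : ι → E} {ε : ℝ} (hε : 0 < ε)
    (hf : Pairwise fun i j => ε ≤ dist (f i) (f j)) :
    ¬ TopologicalSpace.SeparableSpace E := by
  intro _
  have hdisj : Pairwise (Function.onFun Disjoint fun i => ball (f i) (ε / 2)) :=
    fun i j hij => ball_disjoint_ball (by linarith [hf hij])
  exact not_countable
    (hdisj.countable_of_isOpen_disjoint (fun _ => isOpen_ball)
      fun _ => nonempty_ball.2 (half_pos hε))

theorem eventually_floor_mul_two_pow_ne {r s : ℝ} (hrs : r ≠ s) :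
    ∀ᶠ n : ℕ in atTop, ⌊r * 2 ^ n⌋ ≠ ⌊s * 2 ^ n⌋ := by
  have hgrow : Tendsto (fun n : ℕ => |r - s| * 2 ^ n) atTop atTop :=
    (tendsto_pow_atTop_atTop_of_one_lt one_lt_two).const_mul_atTop
      (abs_pos.2 (sub_ne_zero.2 hrs))
  filter_upwards [hgrow.eventually_gt_atTop 1] with n hn hfloor
  have hclose := Int.abs_sub_lt_one_of_floor_eq_floor hfloor
  rw [← sub_mul, abs_mul, abs_of_pos (by positivity : (0 : ℝ) < 2 ^ n)] at hclose
  linarith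

local notation "ℓ∞" => lp (fun _ : ℕ => ℝ) ⊤

def c₀ : Set ℓ∞ := {w | Tendsto (fun n => w n) atTop (𝓝 0)}

theorem le_infDist_c₀_of_frequently_le_abs {u : ℓ∞} {a : ℝ}
    (hu : ∃ᶠ m in atTop, a ≤ |u m|) : a ≤ infDist u c₀ := by
  have hc₀ : (0 : ℓ∞) ∈ c₀ := tendsto_const_nhds
  refine (le_infDist ⟨0, hc₀⟩).2 fun w hw => le_of_forall_sub_le fun ε hε => ?_
  obtain ⟨m, ham, hwm⟩ := (hu.and_eventually (hw.eventually (ball_mem_nhds 0 hε))).exists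
  rw [Real.dist_0_eq_abs] at hwm
  calc a - ε ≤ |u m| - |w m| := by linarith
    _ ≤ ‖(u - w) m‖ := by
      rw [lp.coeFn_sub, Pi.sub_apply, Real.norm_eq_abs]
      exact abs_sub_abs_le_abs_sub _ _
    _ ≤ dist u w := by
      rw [dist_eq_norm]
      exact lp.norm_apply_le_norm ENNReal.top_ne_zero _ m

theorem memℓp_indicator_one {α : Type*} (s : Set α) : Memℓp (s.indicator (1 : α → ℝ)) ⊤ :=
  memℓp_infty ⟨1, by
    rintro _ ⟨m, rfl⟩
    simpa using norm_indicator_le_norm_self (1 : α → ℝ) m⟩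

noncomputable def indicatorLinfty (A : Set ℕ) : ℓ∞ := ⟨A.indicator 1, memℓp_indicator_one A⟩

theorem one_le_infDist_indicatorLinfty_sub {A B : Set ℕ} (h : (A \ B).Infinite) :
    1 ≤ infDist (indicatorLinfty A - indicatorLinfty B) c₀ := by
  refine le_infDist_c₀_of_frequently_le_abs (Nat.frequently_atTop_iff_infinite.2 h |>.mono ?_)
  rintro m ⟨hA, hB⟩
  rw [lp.coeFn_sub, Pi.sub_apply]
  simp [indicatorLinfty, hA, hB]

def codedGraph (f : ℕ → ℤ) : Set ℕ := Set.range fun n => encode (n, f n)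

theorem infinite_codedGraph_diff {f g : ℕ → ℤ} (hfg : ∀ᶠ n in atTop, f n ≠ g n) :
    (codedGraph f \ codedGraph g).Infinite := by
  have hinj : Function.Injective fun n => encode (n, f n) :=
    encode_injective.comp fun a b h => congrArg Prod.fst h
  refine ((Nat.frequently_atTop_iff_infinite.1 hfg.frequently).image hinj.injOn).mono ?_
  rintro _ ⟨n, hn, rfl⟩
  refine ⟨⟨n, rfl⟩, ?_⟩
  rintro ⟨k, hk⟩
  obtain ⟨rfl, hgf⟩ := Prod.ext_iff.1 (encode_injective hk)
  exact hn hgf.symm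

theorem quotient_not_separable_of_linfty_embedding_general
    (X : Type*) [NormedAddCommGroup X] [NormedSpace ℝ X]
    (C : Submodule ℝ X)
    (J : lp (fun _ : ℕ => ℝ) ⊤ →L[ℝ] X)
    (c : ℝ) (hc : 0 < c)
    (hlow : ∀ u : lp (fun _ : ℕ => ℝ) ⊤,
      c * Metric.infDist u {w : lp (fun _ : ℕ => ℝ) ⊤ |
          Tendsto (fun n => w n) atTop (nhds 0)}
        ≤ Metric.infDist (J u) (C : Set X)) :
    ¬ TopologicalSpace.SeparableSpace (X ⧸ C) := by
  set u : ℝ → ℓ∞ := fun r => indicatorLinfty (codedGraph fun n => ⌊r * 2 ^ n⌋)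
  refine Pairwise.not_separableSpace_of_le_dist hc
    (f := fun r => (Submodule.Quotient.mk (J (u r)) : X ⧸ C)) fun r s hrs => ?_
  calc c = c * 1 := (mul_one c).symm
    _ ≤ c * infDist (u r - u s) c₀ := by
      gcongr
      exact one_le_infDist_indicatorLinfty_sub
        (infinite_codedGraph_diff (eventually_floor_mul_two_pow_ne hrs))
    _ ≤ infDist (J (u r - u s)) C := hlow _
    _ = dist (Submodule.Quotient.mk (J (u r)) : X ⧸ C) (Submodule.Quotient.mk (J (u s))) := by
      rw [dist_eq_norm, ← Submodule.Quotient.mk_sub, ← map_sub]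
      exact (QuotientAddGroup.norm_mk (S := C.toAddSubgroup) _).symm

/-- If a closed subspace `C` of a normed space `X` receives `c₀` under a bounded map
`J : ℓ^∞ → X` which is bounded below at the level of quotients, then `X ⧸ C` is not
separable. -/
theorem quotient_not_separable_of_linfty_embedding
    (X : Type*) [NormedAddCommGroup X] [NormedSpace ℝ X]
    (C : Submodule ℝ X) (hC : IsClosed (C : Set X))
    (J : lp (fun _ : ℕ => ℝ) ⊤ →L[ℝ] X)
    (hJc0 : ∀ u : lp (fun _ : ℕ => ℝ) ⊤,
      Tendsto (fun n => u n) atTop (nhds 0) → J u ∈ C)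
    (c : ℝ) (hc : 0 < c)
    (hlow : ∀ u : lp (fun _ : ℕ => ℝ) ⊤,
      c * Metric.infDist u {w : lp (fun _ : ℕ => ℝ) ⊤ |
          Tendsto (fun n => w n) atTop (nhds 0)}
        ≤ Metric.infDist (J u) (C : Set X)) :
    ¬ TopologicalSpace.SeparableSpace (X ⧸ C) :=
  quotient_not_separable_of_linfty_embedding_general X C J c hc hlow
end
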